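/- For every finite simple graph G, b(G) = (-1)^{|V(G)|} · ∑_{H ⊑ G} a(H), where the sum is over all induced subgraphs H of G (including the null graph and G itself). -/

import Mathlib

open scoped Classical

/-- A graph is *even* if every connected component has an even number of vertices. -/
def SimpleGraph.IsEvenGraph {V : Type*} (G : SimpleGraph V) : Prop :=
  ∀ c : G.ConnectedComponent, Even (Nat.card c.supp)

/-- A graph is *odd* if every connected component has an odd number of vertices. -/
def SimpleGraph.IsOddGraph {V : Type*} (G : SimpleGraph V) : Prop :=
  ∀ c : G.ConnectedComponent, Odd (Nat.card c.supp)

/-- The number of connected components of a graph. -/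
noncomputable def SimpleGraph.kappa {V : Type*} (G : SimpleGraph V) : ℕ :=
  Nat.card G.ConnectedComponent

/-- The `a`-number of the induced subgraph `G[s]`, defined recursively:
`1` for the null graph, `0` if `G[s]` is not even, and minus the sum of the
`a`-numbers of all proper induced subgraphs otherwise. -/
noncomputable def aNum {V : Type*} (G : SimpleGraph V) (s : Finset V) : ℤ :=
  if s = ∅ then 1
  else if (G.induce (s : Set V)).IsEvenGraph then
    - ∑ t ∈ (s.powerset.filter (· ≠ s)).attach, aNum G t.1
  else 0
termination_by s.card
decreasing_by
  have h := t.2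
  simp only [Finset.mem_filter, Finset.mem_powerset] at h
  exact Finset.card_lt_card (lt_of_le_of_ne h.1 h.2)

/-- The `b`-number of the induced subgraph `G[s]`, defined recursively:
`1` for the null graph, `0` if `G[s]` is not odd, and minus the sum of the
`b`-numbers of all proper induced subgraphs otherwise. -/
noncomputable def bNum {V : Type*} (G : SimpleGraph V) (s : Finset V) : ℤ :=
  if s = ∅ then 1
  else if (G.induce (s : Set V)).IsOddGraph then
    - ∑ t ∈ (s.powerset.filter (· ≠ s)).attach, bNum G t.1
  else 0
termination_by s.card
decreasing_by
  have h := t.2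
  simp only [Finset.mem_filter, Finset.mem_powerset] at h
  exact Finset.card_lt_card (lt_of_le_of_ne h.1 h.2)

/-- The `a`-number of a finite graph `G`. -/
noncomputable def aNumber {V : Type*} [Fintype V] (G : SimpleGraph V) : ℤ :=
  aNum G Finset.univ

/-- The `b`-number of a finite graph `G`. -/
noncomputable def bNumber {V : Type*} [Fintype V] (G : SimpleGraph V) : ℤ :=
  bNum G Finset.univ

section AuxA
variable {V : Type*} (G : SimpleGraph V)

lemma aNum_empty : aNum G ∅ = 1 := by rw [aNum]; simp

lemma aNum_of_not_even {s : Finset V} (hs : s ≠ ∅)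
    (h : ¬ (G.induce (s : Set V)).IsEvenGraph) : aNum G s = 0 := by
  rw [aNum, if_neg hs, if_neg h]

lemma aNum_of_even {s : Finset V} (hs : s ≠ ∅)
    (h : (G.induce (s : Set V)).IsEvenGraph) :
    aNum G s = - ∑ t ∈ s.powerset.erase s, aNum G t := by
  rw [aNum, if_neg hs, if_pos h]
  rw [← Finset.filter_ne']
  congr 1
  exact Finset.sum_attach _ _

lemma sum_aNum_zero {s : Finset V} (hs : s ≠ ∅)
    (h : (G.induce (s : Set V)).IsEvenGraph) :
    ∑ t ∈ s.powerset, aNum G t = 0 := by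
  have h1 := aNum_of_even G hs h
  have h2 : ∑ t ∈ s.powerset, aNum G t
      = aNum G s + ∑ t ∈ s.powerset.erase s, aNum G t :=
    (Finset.add_sum_erase _ _ (Finset.mem_powerset_self s)).symm
  linarith

lemma bNum_empty : bNum G ∅ = 1 := by rw [bNum]; simp

lemma bNum_of_not_odd {s : Finset V} (hs : s ≠ ∅)
    (h : ¬ (G.induce (s : Set V)).IsOddGraph) : bNum G s = 0 := by
  rw [bNum, if_neg hs, if_neg h]

lemma bNum_of_odd {s : Finset V} (hs : s ≠ ∅)
    (h : (G.induce (s : Set V)).IsOddGraph) :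
    bNum G s = - ∑ t ∈ s.powerset.erase s, bNum G t := by
  rw [bNum, if_neg hs, if_pos h]
  rw [← Finset.filter_ne']
  congr 1
  exact Finset.sum_attach _ _

end AuxA

section B
variable {V : Type*} (G : SimpleGraph V)

lemma walk_stays {s x : Finset V} (hx : x ⊆ s)
    (h : ∀ u ∈ x, ∀ v ∈ s \ x, ¬ G.Adj u v)
    {a b : ((s : Set V) : Type _)} (w : (G.induce (s : Set V)).Walk a b) (ha : (a : V) ∈ x) :
    ∃ hb : (b : V) ∈ x,
      (G.induce (x : Set V)).Reachable ⟨a, Finset.mem_coe.2 ha⟩ ⟨b, Finset.mem_coe.2 hb⟩ := by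
  induction w with
  | nil => exact ⟨ha, SimpleGraph.Reachable.refl _⟩
  | @cons a c b hadj p ih =>
      have hadj' : G.Adj (a : V) (c : V) := hadj
      have hc : (c : V) ∈ x := by
        by_contra hc
        exact h _ ha _ (Finset.mem_sdiff.2 ⟨Finset.mem_coe.1 c.2, hc⟩) hadj'
      obtain ⟨hb, r⟩ := ih hc
      refine ⟨hb, SimpleGraph.Reachable.trans ?_ r⟩
      exact SimpleGraph.Adj.reachable hadj'

lemma reach_of_reach_sub {s x : Finset V} (hx : x ⊆ s)
    {a b : V} (ha : a ∈ x) (hb : b ∈ x)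
    (r : (G.induce (x : Set V)).Reachable ⟨a, Finset.mem_coe.2 ha⟩ ⟨b, Finset.mem_coe.2 hb⟩) :
    (G.induce (s : Set V)).Reachable ⟨a, Finset.mem_coe.2 (hx ha)⟩ ⟨b, Finset.mem_coe.2 (hx hb)⟩ := by
  have := r.map (G.induceHomOfLE (by exact_mod_cast Finset.coe_subset.2 hx)).toHom
  exact this

lemma val_image_supp_eq {s x : Finset V} (hx : x ⊆ s)
    (h : ∀ u ∈ x, ∀ v ∈ s \ x, ¬ G.Adj u v) {v : V} (hv : v ∈ x) :
    (Subtype.val '' ((G.induce (s : Set V)).connectedComponentMk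
        ⟨v, Finset.mem_coe.2 (hx hv)⟩).supp)
    = (Subtype.val '' ((G.induce (x : Set V)).connectedComponentMk
        ⟨v, Finset.mem_coe.2 hv⟩).supp) := by
  ext u
  simp only [Set.mem_image, SimpleGraph.ConnectedComponent.mem_supp_iff,
    SimpleGraph.ConnectedComponent.eq]
  constructor
  · rintro ⟨⟨u, hu⟩, hr, rfl⟩
    obtain ⟨w⟩ := hr
    obtain ⟨hb, r⟩ := walk_stays G hx h w.reverse hv
    exact ⟨⟨u, Finset.mem_coe.2 hb⟩, r.symm, rfl⟩
  · rintro ⟨⟨u, hu⟩, hr, rfl⟩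
    have hu' : u ∈ x := Finset.mem_coe.1 hu
    exact ⟨⟨u, Finset.mem_coe.2 (hx hu')⟩, reach_of_reach_sub G hx hu' hv hr, rfl⟩

lemma supp_card_eq {s x : Finset V} (hx : x ⊆ s)
    (h : ∀ u ∈ x, ∀ v ∈ s \ x, ¬ G.Adj u v) {v : V} (hv : v ∈ x) :
    Nat.card ((G.induce (s : Set V)).connectedComponentMk
        ⟨v, Finset.mem_coe.2 (hx hv)⟩).supp
    = Nat.card ((G.induce (x : Set V)).connectedComponentMk
        ⟨v, Finset.mem_coe.2 hv⟩).supp := by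
  rw [← Nat.card_image_of_injective Subtype.val_injective, val_image_supp_eq G hx h hv,
    Nat.card_image_of_injective Subtype.val_injective]

lemma isEvenGraph_induce_iff {s x : Finset V} (hx : x ⊆ s)
    (h : ∀ u ∈ x, ∀ v ∈ s \ x, ¬ G.Adj u v) :
    (G.induce (s : Set V)).IsEvenGraph ↔
      (G.induce (x : Set V)).IsEvenGraph ∧ (G.induce ((s \ x : Finset V) : Set V)).IsEvenGraph := by
  have hy : s \ x ⊆ s := Finset.sdiff_subset
  have h' : ∀ u ∈ s \ x, ∀ v ∈ s \ (s \ x), ¬ G.Adj u v := by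
    intro u hu v hv hadj
    have : v ∈ x := by
      have := Finset.mem_sdiff.1 hv
      rcases Finset.mem_sdiff.1 hu with ⟨hu1, hu2⟩
      by_contra hvx
      exact this.2 (Finset.mem_sdiff.2 ⟨this.1, hvx⟩)
    exact h v this u hu hadj.symm
  constructor
  · intro he
    constructor
    · intro c
      obtain ⟨v, hv⟩ := c.exists_rep
      have hv' : (G.induce (x : Set V)).connectedComponentMk v = c := hv
      have hvx : (v : V) ∈ x := Finset.mem_coe.1 v.2
      have key := supp_card_eq G hx h hvx
      rw [show (⟨(v:V), Finset.mem_coe.2 hvx⟩ : ((x : Set V) : Type _)) = v from rfl, hv'] at key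
      rw [← key]
      exact he _
    · intro c
      obtain ⟨v, hv⟩ := c.exists_rep
      have hv' : (G.induce ((s \ x : Finset V) : Set V)).connectedComponentMk v = c := hv
      have hvy : (v : V) ∈ s \ x := Finset.mem_coe.1 v.2
      have key := supp_card_eq G hy h' hvy
      rw [show (⟨(v:V), Finset.mem_coe.2 hvy⟩ : (((s \ x : Finset V) : Set V) : Type _)) = v from rfl, hv'] at key
      rw [← key]
      exact he _
  · rintro ⟨h1, h2⟩ c
    obtain ⟨v, hv⟩ := c.exists_rep
    have hv' : (G.induce (s : Set V)).connectedComponentMk v = c := hv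
    have hvs : (v : V) ∈ s := Finset.mem_coe.1 v.2
    by_cases hvx : (v : V) ∈ x
    · have key := supp_card_eq G hx h hvx
      rw [show (⟨(v:V), Finset.mem_coe.2 (hx hvx)⟩ : ((s : Set V) : Type _)) = v from rfl, hv'] at key
      rw [key]
      exact h1 _
    · have hvy : (v : V) ∈ s \ x := Finset.mem_sdiff.2 ⟨hvs, hvx⟩
      have key := supp_card_eq G hy h' hvy
      rw [show (⟨(v:V), Finset.mem_coe.2 (hy hvy)⟩ : ((s : Set V) : Type _)) = v from rfl, hv'] at key
      rw [key]
      exact h2 _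

end B

section AuxC
variable {V : Type*} (G : SimpleGraph V)

lemma sum_powerset_union {x y : Finset V} (hd : Disjoint x y) (f : Finset V → ℤ) :
    ∑ t ∈ (x ∪ y).powerset, f t
      = ∑ p ∈ x.powerset ×ˢ y.powerset, f (p.1 ∪ p.2) := by
  refine Finset.sum_nbij' (fun t => (t ∩ x, t ∩ y)) (fun p => p.1 ∪ p.2) ?_ ?_ ?_ ?_ ?_
  · intro t ht
    simp only [Finset.mem_product, Finset.mem_powerset]
    exact ⟨Finset.inter_subset_right, Finset.inter_subset_right⟩
  · intro p hp
    simp only [Finset.mem_product, Finset.mem_powerset] at hp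
    exact Finset.mem_powerset.2 (Finset.union_subset_union hp.1 hp.2)
  · intro t ht
    rw [Finset.mem_powerset] at ht
    show (t ∩ x) ∪ (t ∩ y) = t
    ext a
    simp only [Finset.mem_union, Finset.mem_inter]
    constructor
    · rintro (⟨h, _⟩ | ⟨h, _⟩) <;> exact h
    · intro h
      rcases Finset.mem_union.1 (ht h) with h' | h'
      · exact Or.inl ⟨h, h'⟩
      · exact Or.inr ⟨h, h'⟩
  · intro p hp
    simp only [Finset.mem_product, Finset.mem_powerset] at hp
    show ((p.1 ∪ p.2) ∩ x, (p.1 ∪ p.2) ∩ y) = p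
    have h1 : (p.1 ∪ p.2) ∩ x = p.1 := by
      ext a
      simp only [Finset.mem_inter, Finset.mem_union]
      constructor
      · rintro ⟨h | h, hx⟩
        · exact h
        · exact absurd hx (Finset.disjoint_left.1 hd.symm (hp.2 h))
      · intro h
        exact ⟨Or.inl h, hp.1 h⟩
    have h2 : (p.1 ∪ p.2) ∩ y = p.2 := by
      ext a
      simp only [Finset.mem_inter, Finset.mem_union]
      constructor
      · rintro ⟨h | h, hy⟩
        · exact absurd hy (Finset.disjoint_left.1 hd (hp.1 h))
        · exact h
      · intro h
        exact ⟨Or.inr h, hp.2 h⟩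
    exact Prod.ext h1 h2
  · intro t ht
    show f t = f (t ∩ x ∪ t ∩ y)
    rw [Finset.mem_powerset] at ht
    congr 1
    ext a
    simp only [Finset.mem_union, Finset.mem_inter]
    constructor
    · intro h
      rcases Finset.mem_union.1 (ht h) with h' | h'
      · exact Or.inl ⟨h, h'⟩
      · exact Or.inr ⟨h, h'⟩
    · rintro (⟨h, _⟩ | ⟨h, _⟩) <;> exact h

lemma sum_neg_one_pow_filter {s u : Finset V} (hu : u ⊆ s) :
    ∑ t ∈ s.powerset.filter (fun t => u ⊆ t), (-1 : ℤ) ^ t.card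
      = if u = s then (-1 : ℤ) ^ s.card else 0 := by
  have key : ∑ t ∈ s.powerset.filter (fun t => u ⊆ t), (-1 : ℤ) ^ t.card
      = ∑ w ∈ (s \ u).powerset, (-1 : ℤ) ^ u.card * (-1 : ℤ) ^ w.card := by
    refine Finset.sum_nbij' (fun t => t \ u) (fun w => w ∪ u) ?_ ?_ ?_ ?_ ?_
    · intro t ht
      simp only [Finset.mem_filter, Finset.mem_powerset] at ht
      exact Finset.mem_powerset.2 (Finset.sdiff_subset_sdiff ht.1 le_rfl)
    · intro w hw
      rw [Finset.mem_powerset] at hw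
      refine Finset.mem_filter.2 ⟨Finset.mem_powerset.2 (Finset.union_subset ?_ hu), Finset.subset_union_right⟩
      exact hw.trans Finset.sdiff_subset
    · intro t ht
      simp only [Finset.mem_filter, Finset.mem_powerset] at ht
      show (t \ u) ∪ u = t
      exact Finset.sdiff_union_of_subset ht.2
    · intro w hw
      rw [Finset.mem_powerset] at hw
      show (w ∪ u) \ u = w
      rw [Finset.union_sdiff_right, Finset.sdiff_eq_self_of_disjoint]
      exact Finset.disjoint_of_subset_left hw Finset.sdiff_disjoint
    · intro t ht
      simp only [Finset.mem_filter, Finset.mem_powerset] at ht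
      show ((-1 : ℤ)) ^ t.card = (-1 : ℤ) ^ u.card * (-1 : ℤ) ^ (t \ u).card
      rw [← pow_add]
      congr 1
      have hle := Finset.card_le_card ht.2
      rw [Finset.card_sdiff_of_subset ht.2]
      omega
  rw [key, ← Finset.mul_sum, Finset.sum_powerset_neg_one_pow_card]
  by_cases h : u = s
  · subst h
    simp
  · have hne : ¬ (s \ u = ∅) := by
      intro he
      have hc := Finset.card_sdiff_of_subset hu
      rw [he] at hc
      simp only [Finset.card_empty] at hc
      have hle := Finset.card_le_card hu
      exact h (Finset.eq_of_subset_of_card_le hu (by omega))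
    rw [if_neg hne, if_neg h, mul_zero]

end AuxC

section AuxD
variable {V : Type*} (G : SimpleGraph V)

lemma not_even_of_odd {s : Finset V} (hs : s ≠ ∅)
    (h : (G.induce (s : Set V)).IsOddGraph) :
    ¬ (G.induce (s : Set V)).IsEvenGraph := by
  intro he
  obtain ⟨v, hv⟩ := Finset.nonempty_iff_ne_empty.2 hs
  have hc := h ((G.induce (s : Set V)).connectedComponentMk ⟨v, Finset.mem_coe.2 hv⟩)
  have hc' := he ((G.induce (s : Set V)).connectedComponentMk ⟨v, Finset.mem_coe.2 hv⟩)
  exact (Nat.not_odd_iff_even.2 hc') hc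

lemma aNum_mul : ∀ n (x y : Finset V), x.card + y.card ≤ n → Disjoint x y →
    (∀ u ∈ x, ∀ v ∈ y, ¬ G.Adj u v) → aNum G (x ∪ y) = aNum G x * aNum G y := by
  intro n
  induction n with
  | zero =>
      intro x y hn hd h
      have hx : x = ∅ := Finset.card_eq_zero.1 (by omega)
      have hy : y = ∅ := Finset.card_eq_zero.1 (by omega)
      subst hx; subst hy
      simp [aNum_empty]
  | succ n ih =>
      intro x y hn hd h
      by_cases hx : x = ∅
      · subst hx; simp [aNum_empty]
      by_cases hy : y = ∅
      · subst hy; simp [aNum_empty]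
      have hu : x ∪ y ≠ ∅ := by
        intro hc
        rw [Finset.union_eq_empty] at hc
        exact hx hc.1
      have hcross : ∀ u ∈ x, ∀ v ∈ (x ∪ y) \ x, ¬ G.Adj u v := by
        intro u hu' v hv
        rw [Finset.union_sdiff_cancel_left hd] at hv
        exact h u hu' v hv
      have hiff := isEvenGraph_induce_iff G Finset.subset_union_left hcross
      rw [Finset.union_sdiff_cancel_left hd] at hiff
      by_cases he : (G.induce ((x ∪ y : Finset V) : Set V)).IsEvenGraph
      · obtain ⟨hex, hey⟩ := hiff.1 he
        set P := x.powerset ×ˢ y.powerset with hPdef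
        have hmem : (x, y) ∈ P := Finset.mem_product.2
          ⟨Finset.mem_powerset_self x, Finset.mem_powerset_self y⟩
        have hT : ∑ t ∈ (x ∪ y).powerset, aNum G t = 0 := sum_aNum_zero G hu he
        have hP : ∑ p ∈ P, aNum G (p.1 ∪ p.2) = 0 := by
          rw [← sum_powerset_union hd, hT]
        have h4 : ∑ p ∈ P, aNum G (p.1 ∪ p.2)
            = aNum G (x ∪ y) + ∑ p ∈ P.erase (x, y), aNum G (p.1 ∪ p.2) :=
          (Finset.add_sum_erase _ _ hmem).symm
        have h5 : ∑ p ∈ P.erase (x, y), aNum G (p.1 ∪ p.2)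
            = ∑ p ∈ P.erase (x, y), aNum G p.1 * aNum G p.2 := by
          refine Finset.sum_congr rfl ?_
          intro p hp
          have hpne := Finset.ne_of_mem_erase hp
          have hpP := Finset.mem_of_mem_erase hp
          rw [hPdef, Finset.mem_product, Finset.mem_powerset, Finset.mem_powerset] at hpP
          have e1 := Finset.card_le_card hpP.1
          have e2 := Finset.card_le_card hpP.2
          have hlt : p.1.card < x.card ∨ p.2.card < y.card := by
            by_contra hcon
            push_neg at hcon
            have h1 : p.1 = x := Finset.eq_of_subset_of_card_le hpP.1 hcon.1
            have h2 : p.2 = y := Finset.eq_of_subset_of_card_le hpP.2 hcon.2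
            exact hpne (Prod.ext h1 h2)
          exact ih p.1 p.2 (by omega) (hd.mono hpP.1 hpP.2)
            (fun u hu' v hv' => h u (hpP.1 hu') v (hpP.2 hv'))
        have h7 : ∑ p ∈ P, aNum G p.1 * aNum G p.2
            = (∑ u ∈ x.powerset, aNum G u) * (∑ w ∈ y.powerset, aNum G w) := by
          rw [Finset.sum_mul_sum, hPdef, Finset.sum_product]
        have h6 : ∑ p ∈ P, aNum G p.1 * aNum G p.2
            = aNum G x * aNum G y + ∑ p ∈ P.erase (x, y), aNum G p.1 * aNum G p.2 :=
          (Finset.add_sum_erase _ _ hmem).symm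
        have h8 : ∑ u ∈ x.powerset, aNum G u = 0 := sum_aNum_zero G hx hex
        rw [h8, zero_mul] at h7
        linarith
      · rw [aNum_of_not_even G hu he]
        rcases not_and_or.1 (fun hc => he (hiff.2 hc)) with hne | hne
        · rw [aNum_of_not_even G hx hne, zero_mul]
        · rw [aNum_of_not_even G hy hne, mul_zero]

end AuxD

section Main
variable {V : Type*} (G : SimpleGraph V)

lemma key_bNum : ∀ n (s : Finset V), s.card ≤ n →
    bNum G s = (-1 : ℤ) ^ s.card * ∑ t ∈ s.powerset, aNum G t := by
  intro n
  induction n with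
  | zero =>
      intro s hn
      have hs : s = ∅ := Finset.card_eq_zero.1 (by omega)
      subst hs
      simp [bNum_empty, aNum_empty]
  | succ n ih =>
      intro s hn
      by_cases hs : s = ∅
      · subst hs
        simp [bNum_empty, aNum_empty]
      by_cases ho : (G.induce (s : Set V)).IsOddGraph
      · -- odd case
        have ha0 : aNum G s = 0 := aNum_of_not_even G hs (not_even_of_odd G hs ho)
        have hpows : ∀ t ∈ s.powerset, t.powerset = s.powerset.filter (fun u => u ⊆ t) := by
          intro t ht
          rw [Finset.mem_powerset] at ht
          ext u
          simp only [Finset.mem_powerset, Finset.mem_filter]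
          exact ⟨fun h => ⟨h.trans ht, h⟩, fun h => h.2⟩
        have hF : ∑ t ∈ s.powerset, (-1 : ℤ) ^ t.card * ∑ u ∈ t.powerset, aNum G u = 0 := by
          calc ∑ t ∈ s.powerset, (-1 : ℤ) ^ t.card * ∑ u ∈ t.powerset, aNum G u
              = ∑ t ∈ s.powerset, ∑ u ∈ s.powerset,
                  (if u ⊆ t then (-1 : ℤ) ^ t.card * aNum G u else 0) := by
                refine Finset.sum_congr rfl fun t ht => ?_
                rw [Finset.mul_sum, hpows t ht, Finset.sum_filter]
            _ = ∑ u ∈ s.powerset, ∑ t ∈ s.powerset,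
                  (if u ⊆ t then (-1 : ℤ) ^ t.card * aNum G u else 0) := Finset.sum_comm
            _ = ∑ u ∈ s.powerset,
                  (∑ t ∈ s.powerset.filter (fun t => u ⊆ t), (-1 : ℤ) ^ t.card) * aNum G u := by
                refine Finset.sum_congr rfl fun u hu => ?_
                rw [Finset.sum_filter, Finset.sum_mul]
                refine Finset.sum_congr rfl fun t ht => ?_
                by_cases h : u ⊆ t
                · rw [if_pos h, if_pos h]
                · rw [if_neg h, if_neg h, zero_mul]
            _ = ∑ u ∈ s.powerset, (if u = s then (-1 : ℤ) ^ s.card else 0) * aNum G u := by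
                refine Finset.sum_congr rfl fun u hu => ?_
                rw [sum_neg_one_pow_filter (Finset.mem_powerset.1 hu)]
            _ = (-1 : ℤ) ^ s.card * aNum G s := by
                rw [Finset.sum_eq_single_of_mem s (Finset.mem_powerset_self s)]
                · rw [if_pos rfl]
                · intro u hu hne
                  rw [if_neg hne, zero_mul]
            _ = 0 := by rw [ha0, mul_zero]
        rw [bNum_of_odd G hs ho]
        have hE : ∑ t ∈ s.powerset.erase s, bNum G t
            = ∑ t ∈ s.powerset.erase s, (-1 : ℤ) ^ t.card * ∑ u ∈ t.powerset, aNum G u := by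
          refine Finset.sum_congr rfl fun t ht => ?_
          have h1 := Finset.ne_of_mem_erase ht
          have h2 := Finset.mem_powerset.1 (Finset.mem_of_mem_erase ht)
          have h3 : t.card < s.card := Finset.card_lt_card (lt_of_le_of_ne h2 h1)
          exact ih t (by omega)
        have hsplit : ∑ t ∈ s.powerset, (-1 : ℤ) ^ t.card * ∑ u ∈ t.powerset, aNum G u
            = (-1 : ℤ) ^ s.card * (∑ u ∈ s.powerset, aNum G u)
              + ∑ t ∈ s.powerset.erase s, (-1 : ℤ) ^ t.card * ∑ u ∈ t.powerset, aNum G u :=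
          (Finset.add_sum_erase _ _ (Finset.mem_powerset_self s)).symm
        rw [hE]
        linarith [hF, hsplit]
      · -- not odd case
        rw [bNum_of_not_odd G hs ho]
        have hex : ∃ c : (G.induce (s : Set V)).ConnectedComponent, Even (Nat.card c.supp) := by
          by_contra hc
          push_neg at hc
          exact ho fun c => Nat.not_even_iff_odd.1 (hc c)
        obtain ⟨c, hc⟩ := hex
        set cset : Finset V := (s.attach.filter fun u =>
            (G.induce (s : Set V)).connectedComponentMk ⟨u.1, Finset.mem_coe.2 u.2⟩ = c).image
              Subtype.val with hcsetdef
        have hmem : ∀ v : V, v ∈ cset ↔ ∃ hv : v ∈ s,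
            (G.induce (s : Set V)).connectedComponentMk ⟨v, Finset.mem_coe.2 hv⟩ = c := by
          intro v
          simp only [hcsetdef, Finset.mem_image, Finset.mem_filter, Finset.mem_attach, true_and]
          constructor
          · rintro ⟨⟨u, hu⟩, h1, rfl⟩
            exact ⟨hu, h1⟩
          · rintro ⟨hv, h1⟩
            exact ⟨⟨v, hv⟩, h1, rfl⟩
        have hsub : cset ⊆ s := by
          intro v hv
          obtain ⟨hv', _⟩ := (hmem v).1 hv
          exact hv'
        have hne : cset ≠ ∅ := by
          obtain ⟨v, hv⟩ := c.exists_rep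
          have hv' : (G.induce (s : Set V)).connectedComponentMk v = c := hv
          exact Finset.ne_empty_of_mem ((hmem (v : V)).2 ⟨Finset.mem_coe.1 v.2, hv'⟩)
        have hcross : ∀ u ∈ cset, ∀ w ∈ s \ cset, ¬ G.Adj u w := by
          intro u hu w hw hadj
          obtain ⟨hus, huc⟩ := (hmem u).1 hu
          obtain ⟨hws, hwc⟩ := Finset.mem_sdiff.1 hw
          apply hwc
          refine (hmem w).2 ⟨hws, ?_⟩
          have hadj' : (G.induce (s : Set V)).Adj ⟨w, Finset.mem_coe.2 hws⟩
              ⟨u, Finset.mem_coe.2 hus⟩ := hadj.symm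
          rw [← huc]
          exact SimpleGraph.ConnectedComponent.connectedComponentMk_eq_of_adj hadj'
        have hcard : Nat.card c.supp = cset.card := by
          have himg : Subtype.val '' c.supp = (cset : Set V) := by
            ext u
            simp only [Set.mem_image, SimpleGraph.ConnectedComponent.mem_supp_iff,
              Finset.mem_coe]
            constructor
            · rintro ⟨⟨u, hu⟩, h1, rfl⟩
              exact (hmem u).2 ⟨Finset.mem_coe.1 hu, h1⟩
            · intro h
              obtain ⟨hv, h1⟩ := (hmem u).1 h
              exact ⟨⟨u, Finset.mem_coe.2 hv⟩, h1, rfl⟩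
          calc Nat.card c.supp
              = Nat.card (Subtype.val '' c.supp) :=
                (Nat.card_image_of_injective Subtype.val_injective _).symm
            _ = Nat.card (cset : Set V) := by rw [himg]
            _ = cset.card := by rw [Nat.card_coe_set_eq, Set.ncard_coe_finset]
        have heven : (G.induce (cset : Set V)).IsEvenGraph := by
          intro d
          obtain ⟨u, hu⟩ := d.exists_rep
          have hu' : (G.induce (cset : Set V)).connectedComponentMk u = d := hu
          have hsupp : ∀ w : ((cset : Set V) : Type _),
              (G.induce (cset : Set V)).connectedComponentMk w = d := by
            intro w
            rw [← hu']
            apply SimpleGraph.ConnectedComponent.eq.2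
            obtain ⟨hws', hwc⟩ := (hmem (w : V)).1 (Finset.mem_coe.1 w.2)
            obtain ⟨hus', huc⟩ := (hmem (u : V)).1 (Finset.mem_coe.1 u.2)
            have hr : (G.induce (s : Set V)).Reachable ⟨(w : V), Finset.mem_coe.2 hws'⟩
                ⟨(u : V), Finset.mem_coe.2 hus'⟩ :=
              SimpleGraph.ConnectedComponent.eq.1 (hwc.trans huc.symm)
            obtain ⟨wk⟩ := hr
            obtain ⟨hb, r⟩ := walk_stays G hsub hcross wk (Finset.mem_coe.1 w.2)
            exact r
          have huniv : d.supp = Set.univ := Set.eq_univ_of_forall fun w => hsupp w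
          have h1 : Nat.card d.supp = cset.card := by
            rw [huniv, Nat.card_univ, Nat.card_coe_set_eq, Set.ncard_coe_finset]
          rw [h1, ← hcard]
          exact hc
        have hSA : ∑ t ∈ s.powerset, aNum G t = 0 := by
          have hus : cset ∪ (s \ cset) = s := Finset.union_sdiff_of_subset hsub
          have hd : Disjoint cset (s \ cset) := Finset.disjoint_sdiff
          calc ∑ t ∈ s.powerset, aNum G t
              = ∑ t ∈ (cset ∪ (s \ cset)).powerset, aNum G t := by rw [hus]
            _ = ∑ p ∈ cset.powerset ×ˢ (s \ cset).powerset, aNum G (p.1 ∪ p.2) :=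
                sum_powerset_union hd _
            _ = ∑ p ∈ cset.powerset ×ˢ (s \ cset).powerset, aNum G p.1 * aNum G p.2 := by
                refine Finset.sum_congr rfl fun p hp => ?_
                rw [Finset.mem_product, Finset.mem_powerset, Finset.mem_powerset] at hp
                exact aNum_mul G (p.1.card + p.2.card) p.1 p.2 le_rfl
                  (hd.mono hp.1 hp.2)
                  (fun a ha b hb => hcross a (hp.1 ha) b (hp.2 hb))
            _ = (∑ u ∈ cset.powerset, aNum G u) * (∑ w ∈ (s \ cset).powerset, aNum G w) := by
                rw [Finset.sum_mul_sum, Finset.sum_product]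
            _ = 0 := by rw [sum_aNum_zero G hne heven, zero_mul]
        rw [hSA, mul_zero]

end Main


/-- `b(G) = (-1)^{|V(G)|} ⬝ ∑_{H ⊑ G} a(H)`, summing over all induced
subgraphs of `G` (including the null graph and `G` itself). -/
theorem bNumber_eq_sum_aNum {V : Type*} [Fintype V] (G : SimpleGraph V) :
    bNumber G = (-1) ^ (Fintype.card V) *
      ∑ s ∈ (Finset.univ : Finset V).powerset, aNum G s := by
  have h := key_bNum G (Finset.univ : Finset V).card Finset.univ le_rfl
  rw [bNumber, h, Finset.card_univ]
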